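/- arXiv:2604.16302 — 2 statements merged into one kernel-verified Lean document; each statement's English description precedes it below -/
import Mathlib

section
/- For every nonempty word w over a finite alphabet Σ, the assembly index of w equals the minimal size of a straight-line program generating w, that is, ASI(w) = SLP(w). -/
/-!
An assembly plan is an SLP whose terminal rules are left implicit: prefixing one terminal rule
for each letter it uses turns a plan with `t` steps into an SLP of size `t`. Conversely, listing
the concatenation nonterminals of an SLP in increasing order gives an assembly plan with one step
per concatenation rule, unless `w` is a single letter, where both measures vanish.
-/

/-- `Avail x i u` : the word `u` is available at step `i` of the plan `x`,
i.e. `u` is a single letter or an earlier step's word. -/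
def Avail {α : Type*} {t : ℕ} (x : Fin t → List α) (i : Fin t) (u : List α) : Prop :=
  (∃ a : α, u = [a]) ∨ ∃ j : Fin t, j < i ∧ x j = u

/-- `IsAssemblyPlan t x w` : `x : Fin t → List α` is an assembly plan for `w`,
each step being a concatenation of two available words, with the last step
equal to `w`; the empty plan (t = 0) is a plan only for single letters. -/
def IsAssemblyPlan {α : Type*} (t : ℕ) (x : Fin t → List α) (w : List α) : Prop :=
  (∀ i : Fin t, ∃ u v : List α, Avail x i u ∧ Avail x i v ∧ x i = u ++ v) ∧
  (if t = 0 then ∃ a : α, w = [a] else ∃ i : Fin t, (i : ℕ) = t - 1 ∧ x i = w)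

/-- The assembly index: minimal number of steps of an assembly plan for `w`. -/
noncomputable def ASI {α : Type*} (w : List α) : ℕ :=
  sInf {t | ∃ x : Fin t → List α, IsAssemblyPlan t x w}

/-- A straight-line program: nonterminals `0,…,m-1`, each with a rule that is
either a terminal `a ∈ Σ` or a concatenation of two earlier nonterminals. -/
structure SLP (α : Type*) where
  m : ℕ
  rule : Fin m → α ⊕ (Fin m × Fin m)
  wf : ∀ i j l, rule i = Sum.inr (j, l) → j < i ∧ l < i

/-- The word derived from nonterminal `i`. -/
def SLP.eval {α : Type*} (G : SLP α) : Fin G.m → List α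
  | i =>
    match h : G.rule i with
    | Sum.inl a => [a]
    | Sum.inr (j, l) =>
        have h1 : (j : ℕ) < (i : ℕ) := (G.wf i j l h).1
        have h2 : (l : ℕ) < (i : ℕ) := (G.wf i j l h).2
        G.eval j ++ G.eval l
termination_by i => (i : ℕ)

/-- The size of an SLP: the number of concatenation rules. -/
def SLP.size {α : Type*} (G : SLP α) : ℕ :=
  (Finset.univ.filter (fun i : Fin G.m => (G.rule i).isRight)).card

/-- `G` generates `w` : the word derived from the last nonterminal is `w`. -/
def SLP.Generates {α : Type*} (G : SLP α) (w : List α) : Prop :=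
  ∃ i : Fin G.m, (i : ℕ) = G.m - 1 ∧ G.eval i = w

/-- The minimal size of an SLP generating `w`. -/
noncomputable def SLPsize {α : Type*} (w : List α) : ℕ :=
  sInf {K | ∃ G : SLP α, G.Generates w ∧ G.size = K}
namespace SLP

variable {α : Type*}

theorem eval_of_rule_eq_inl (G : SLP α) {i : Fin G.m} {a : α} (h : G.rule i = .inl a) :
    G.eval i = [a] := by
  rw [SLP.eval]
  split <;> simp_all

theorem eval_of_rule_eq_inr (G : SLP α) {i j l : Fin G.m} (h : G.rule i = .inr (j, l)) :
    G.eval i = G.eval j ++ G.eval l := by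
  rw [SLP.eval]
  split <;> simp_all

theorem eval_eq_of_rules (G : SLP α) {W : Fin G.m → List α}
    (hl : ∀ i a, G.rule i = .inl a → W i = [a])
    (hr : ∀ i j l, G.rule i = .inr (j, l) → W i = W j ++ W l) : G.eval = W := by
  funext i
  induction i using WellFoundedLT.induction with
  | _ i ih =>
    rcases h : G.rule i with a | ⟨j, l⟩
    · rw [G.eval_of_rule_eq_inl h, hl i a h]
    · obtain ⟨hj, hl'⟩ := G.wf i j l h
      rw [G.eval_of_rule_eq_inr h, hr i j l h, ih j hj, ih l hl']

section OfSteps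

variable {t : ℕ} (L : List α) (P Q : Fin t → Fin (L.length + t))
  (hP : ∀ i, P i < Fin.natAdd _ i) (hQ : ∀ i, Q i < Fin.natAdd _ i)

def ofSteps : SLP α where
  m := L.length + t
  rule := Fin.append (fun k => .inl L[k]) (fun i => .inr (P i, Q i))
  wf i j l h := by
    induction i using Fin.addCases with
    | left k => simp at h
    | right i =>
      simp only [Fin.append_right, Sum.inr.injEq, Prod.mk.injEq] at h
      exact h.1 ▸ h.2 ▸ ⟨hP i, hQ i⟩

theorem size_ofSteps : (ofSteps L P Q hP hQ).size = t := by
  simp only [SLP.size, Finset.card_filter]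
  exact (Fin.sum_univ_add _).trans (by simp [ofSteps])

theorem eval_ofSteps {x : Fin t → List α}
    (hx : ∀ i, x i =
      Fin.append (fun k => [L[k]]) x (P i) ++ Fin.append (fun k => [L[k]]) x (Q i)) :
    (ofSteps L P Q hP hQ).eval = Fin.append (fun k => [L[k]]) x := by
  refine eval_eq_of_rules _ (fun i a h => ?_) (fun i j l h => ?_)
  · induction i using Fin.addCases with
    | left k => simp_all [ofSteps]
    | right i => simp [ofSteps] at h
  · induction i using Fin.addCases with
    | left k => simp [ofSteps] at h
    | right i =>
      simp only [ofSteps, Fin.append_right, Sum.inr.injEq] at h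
      cases h
      rw [Fin.append_right, hx]

end OfSteps

end SLP

namespace IsAssemblyPlan

variable {α : Type*} {t : ℕ} {x : Fin t → List α} {w : List α}

theorem exists_index_of_avail {L : List α} {i : Fin t} {z : List α} (hz : Avail x i z)
    (hL : ∀ a, z = [a] → a ∈ L) :
    ∃ p : Fin (L.length + t), p < Fin.natAdd _ i ∧ Fin.append (fun k => [L[k]]) x p = z := by
  rcases hz with ⟨a, rfl⟩ | ⟨j, hj, rfl⟩
  · obtain ⟨k, hk, rfl⟩ := List.mem_iff_getElem.mp (hL _ rfl)
    exact ⟨Fin.castAdd t ⟨k, hk⟩, Fin.lt_def.mpr (by simp; omega), Fin.append_left _ _ _⟩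
  · exact ⟨Fin.natAdd _ j, Fin.lt_def.mpr (Nat.add_lt_add_left hj _), Fin.append_right _ _ _⟩

theorem exists_slp_generates (hp : IsAssemblyPlan t x w) :
    ∃ G : SLP α, G.Generates w ∧ G.size = t := by
  obtain ⟨hsteps, hlast⟩ := hp
  split_ifs at hlast with ht
  · subst ht
    obtain ⟨a, rfl⟩ := hlast
    refine ⟨SLP.ofSteps [a] Fin.elim0 Fin.elim0 (fun i => i.elim0) (fun i => i.elim0),
      ⟨⟨0, Nat.one_pos⟩, rfl, ?_⟩, SLP.size_ofSteps ..⟩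
    rw [SLP.eval_ofSteps (x := x) _ _ _ _ _ (fun i => i.elim0)]
    rfl
  obtain ⟨iw, hiw, hxw⟩ := hlast
  set L := (List.ofFn x).flatten
  have key : ∀ i, ∃ p q : Fin (L.length + t), p < Fin.natAdd _ i ∧ q < Fin.natAdd _ i ∧
      x i = Fin.append (fun k => [L[k]]) x p ++ Fin.append (fun k => [L[k]]) x q := by
    intro i
    obtain ⟨u, v, hu, hv, huv⟩ := hsteps i
    have hletter : ∀ a, a ∈ x i → a ∈ L := fun a ha =>
      List.mem_flatten_of_mem (List.mem_ofFn.mpr ⟨i, rfl⟩) ha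
    obtain ⟨p, hp, rfl⟩ := exists_index_of_avail hu fun a ha => hletter a (by simp [huv, ha])
    obtain ⟨q, hq, rfl⟩ := exists_index_of_avail hv fun a ha => hletter a (by simp [huv, ha])
    exact ⟨p, q, hp, hq, huv⟩
  choose P Q hP hQ hx using key
  refine ⟨SLP.ofSteps L P Q hP hQ, ⟨Fin.natAdd _ iw, ?_, ?_⟩, SLP.size_ofSteps ..⟩
  · simp [SLP.ofSteps, hiw]
    omega
  · rw [SLP.eval_ofSteps _ _ _ _ _ hx, Fin.append_right, hxw]

end IsAssemblyPlan

theorem exists_isAssemblyPlan_of_ne_nil {α : Type*} {w : List α} (hw : w ≠ []) :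
    ∃ t, ∃ x : Fin t → List α, IsAssemblyPlan t x w := by
  have hlen : 0 < w.length := List.length_pos_iff.mpr hw
  refine ⟨w.length - 1, fun i => w.take (i + 2), fun ⟨i, hi⟩ => ?_, ?_⟩
  · have hstep : w.take (i + 2) = w.take (i + 1) ++ [w[i + 1]] := by
      rw [List.take_add_one, List.getElem?_eq_getElem (by omega), Option.toList_some]
    refine ⟨_, _, ?_, .inl ⟨_, rfl⟩, hstep⟩
    rcases i with _ | j
    · exact .inl ⟨w[0], by simp [List.take_one, List.head?_eq_getElem?]⟩
    · exact .inr ⟨⟨j, by omega⟩, by simp [Fin.lt_def], rfl⟩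
  · split_ifs with ht
    · exact List.length_eq_one_iff.mp (by omega)
    · exact ⟨⟨w.length - 2, by omega⟩, by simp; omega,
        List.take_of_length_le (by simp only; omega)⟩

theorem SLP.Generates.exists_rule_isRight {α : Type*} {G : SLP α} {w : List α}
    (hG : G.Generates w) (hw : ∀ a, w ≠ [a]) :
    ∃ i : Fin G.m, (i : ℕ) = G.m - 1 ∧ G.eval i = w ∧ (G.rule i).isRight := by
  obtain ⟨i, hi, rfl⟩ := hG
  refine ⟨i, hi, rfl, ?_⟩
  rcases h : G.rule i with a | _
  · exact absurd (G.eval_of_rule_eq_inl h) (hw a)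
  · rfl

/-- The steps of the plan are the words of the concatenation nonterminals in increasing order;
the last of them is the start symbol, which is the largest nonterminal. -/
theorem SLP.exists_isAssemblyPlan {α : Type*} (G : SLP α) {w : List α} (hG : G.Generates w)
    (hw : ∀ a, w ≠ [a]) : ∃ x : Fin G.size → List α, IsAssemblyPlan G.size x w := by
  set s := Finset.univ.filter fun i : Fin G.m => (G.rule i).isRight
  set f := s.orderEmbOfFin (rfl : s.card = G.size)
  have avail : ∀ k p, p < f k → Avail (G.eval ∘ f) k (G.eval p) := by
    intro k p hp
    rcases h : G.rule p with a | _
    · exact .inl ⟨a, G.eval_of_rule_eq_inl h⟩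
    · have hps : p ∈ Set.range f := by
        rw [Finset.range_orderEmbOfFin]
        simp [s, h]
      obtain ⟨j, rfl⟩ := hps
      exact .inr ⟨j, f.lt_iff_lt.mp hp, rfl⟩
  obtain ⟨iw, hiw, rfl, hiw_right⟩ := hG.exists_rule_isRight hw
  have hiw_mem : iw ∈ s := by simp [s, hiw_right]
  have hsize : 0 < G.size := Finset.card_pos.mpr ⟨iw, hiw_mem⟩
  refine ⟨G.eval ∘ f, fun k => ?_, ?_⟩
  · have hk : (G.rule (f k)).isRight := (Finset.mem_filter.mp (s.orderEmbOfFin_mem rfl k)).2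
    obtain ⟨⟨j, l⟩, hjl⟩ := Sum.isRight_iff.mp hk
    obtain ⟨hj, hl⟩ := G.wf _ _ _ hjl
    exact ⟨_, _, avail k j hj, avail k l hl, G.eval_of_rule_eq_inr hjl⟩
  · rw [if_neg hsize.ne']
    refine ⟨⟨G.size - 1, by omega⟩, rfl, ?_⟩
    have hmax : s.max' ⟨iw, hiw_mem⟩ = iw :=
      le_antisymm (s.max'_le _ _ fun y _ => Fin.le_def.mpr (by omega)) (s.le_max' _ hiw_mem)
    exact congrArg G.eval ((Finset.orderEmbOfFin_last rfl hsize).trans hmax)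

section Minimum

variable {α : Type*} {w : List α}

theorem ASI_le {t : ℕ} {x : Fin t → List α} (hx : IsAssemblyPlan t x w) : ASI w ≤ t :=
  Nat.sInf_le ⟨x, hx⟩

theorem ASI_singleton (a : α) : ASI [a] = 0 :=
  Nat.eq_zero_of_le_zero <| ASI_le (x := Fin.elim0) ⟨fun i => i.elim0, by simp⟩

theorem exists_isAssemblyPlan_ASI (hw : w ≠ []) : ∃ x, IsAssemblyPlan (ASI w) x w :=
  Nat.sInf_mem (exists_isAssemblyPlan_of_ne_nil hw)

theorem SLPsize_le {G : SLP α} (hG : G.Generates w) : SLPsize w ≤ G.size :=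
  Nat.sInf_le ⟨G, hG, rfl⟩

theorem exists_generates_size_eq_SLPsize {G : SLP α} (hG : G.Generates w) :
    ∃ G' : SLP α, G'.Generates w ∧ G'.size = SLPsize w :=
  Nat.sInf_mem (s := {K | ∃ G : SLP α, G.Generates w ∧ G.size = K}) ⟨G.size, G, hG, rfl⟩

end Minimum

theorem asi_eq_slp_general {α : Type*} (w : List α) (hw : w ≠ []) :
    ASI w = SLPsize w := by
  obtain ⟨x, hx⟩ := exists_isAssemblyPlan_ASI hw
  obtain ⟨G, hG, hGsize⟩ := hx.exists_slp_generates
  obtain ⟨G', hG', hG'size⟩ := exists_generates_size_eq_SLPsize hG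
  refine le_antisymm ?_ (hGsize ▸ SLPsize_le hG)
  by_cases hletter : ∃ a, w = [a]
  · obtain ⟨a, rfl⟩ := hletter
    simp [ASI_singleton]
  · obtain ⟨x', hx'⟩ := G'.exists_isAssemblyPlan hG' (by simpa using hletter)
    exact hG'size ▸ ASI_le hx'

theorem asi_eq_slp {α : Type*} [Fintype α] (w : List α) (hw : w ≠ []) :
    ASI w = SLPsize w :=
  asi_eq_slp_general w hw
end

section
/- For every nonempty word w over a finite alphabet Σ and every natural number K, there exists a straight-line program of size at most K generating w if and only if there exists an assembly plan for w with at most K concatenation steps; that is, SLP(w) ≤ K if and only if ASI(w) ≤ K. -/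
/-! Terminal rules are free, so an SLP and an assembly plan are the same thing: the words of the
concatenation nonterminals of an SLP, listed in order, form an assembly plan, and conversely a plan
becomes an SLP step by step, adding a terminal rule whenever a step uses a letter. Hence both
sets of sizes have the same elements below every `K`, and `SLPsize w = ASI w`. -/

namespace SLP

variable {α : Type*}

theorem eval_of_rule_inl (G : SLP α) (i : Fin G.m) {a : α} (h : G.rule i = .inl a) :
    G.eval i = [a] := by
  rw [eval]; split <;> simp_all

theorem eval_of_rule_inr (G : SLP α) (i : Fin G.m) {j l : Fin G.m} (h : G.rule i = .inr (j, l)) :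
    G.eval i = G.eval j ++ G.eval l := by
  rw [eval]; split <;> simp_all

def empty : SLP α where
  m := 0
  rule := Fin.elim0
  wf i := i.elim0

theorem size_empty : (empty : SLP α).size = 0 := rfl

-- Reducible, so that `simp` sees `(G.snoc r).m` as `G.m + 1`.
abbrev snoc (G : SLP α) (r : α ⊕ (Fin G.m × Fin G.m)) : SLP α where
  m := G.m + 1
  rule := Fin.lastCases (r.map id (Prod.map Fin.castSucc Fin.castSucc))
    fun i => (G.rule i).map id (Prod.map Fin.castSucc Fin.castSucc)
  wf i j l h := by
    induction i using Fin.lastCases with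
    | last =>
      rcases r with a | ⟨j', l'⟩
      · simp at h
      · simp only [Fin.lastCases_last, Sum.map_inr, Sum.inr.injEq, Prod.ext_iff] at h
        simp [← h.1, ← h.2, Fin.castSucc_lt_last]
    | cast i =>
      rcases hr : G.rule i with a | ⟨j', l'⟩
      · simp [hr] at h
      · simp only [Fin.lastCases_castSucc, hr, Sum.map_inr, Sum.inr.injEq, Prod.ext_iff] at h
        simpa [← h.1, ← h.2] using G.wf i j' l' hr

variable (G : SLP α) (r : α ⊕ (Fin G.m × Fin G.m))

theorem eval_snoc_castSucc (i : Fin G.m) : (G.snoc r).eval i.castSucc = G.eval i := by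
  induction i using WellFoundedLT.induction with
  | _ i ih =>
    rcases hr : G.rule i with a | ⟨j, l⟩
    · rw [G.eval_of_rule_inl i hr, eval_of_rule_inl (G.snoc r) i.castSucc (a := a)]
      simp [hr]
    · rw [G.eval_of_rule_inr i hr,
        eval_of_rule_inr (G.snoc r) i.castSucc (j := j.castSucc) (l := l.castSucc),
        ih j (G.wf i j l hr).1, ih l (G.wf i j l hr).2]
      simp [hr]

theorem range_eval_subset_snoc : Set.range G.eval ⊆ Set.range (G.snoc r).eval := by
  rintro _ ⟨i, rfl⟩
  exact ⟨i.castSucc, G.eval_snoc_castSucc r i⟩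

theorem generates_snoc_eval_last : (G.snoc r).Generates ((G.snoc r).eval (Fin.last G.m)) :=
  ⟨Fin.last G.m, rfl, rfl⟩

theorem eval_snoc_last_inl (a : α) : (G.snoc (.inl a)).eval (Fin.last G.m) = [a] :=
  eval_of_rule_inl (G.snoc (.inl a)) (Fin.last G.m) (by simp)

theorem eval_snoc_last_inr (j l : Fin G.m) :
    (G.snoc (.inr (j, l))).eval (Fin.last G.m) = G.eval j ++ G.eval l := by
  rw [eval_of_rule_inr (G.snoc _) (Fin.last G.m) (j := j.castSucc) (l := l.castSucc)
      (by simp),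
    eval_snoc_castSucc, eval_snoc_castSucc]

theorem size_snoc : (G.snoc r).size = G.size + if r.isRight then 1 else 0 := by
  simp only [size, Finset.card_filter]
  rw [Fin.sum_univ_castSucc]
  simp

end SLP

section PlanToSLP

variable {α : Type*} {t : ℕ} {x : Fin t → List α}

-- A letter costs only a terminal rule, which does not count towards the size.
theorem SLP.exists_mem_range_eval_of_avail (G : SLP α) {i : Fin t}
    (hG : ∀ j < i, x j ∈ Set.range G.eval) {u : List α} (hu : Avail x i u) :
    ∃ G' : SLP α, G'.size = G.size ∧ Set.range G.eval ⊆ Set.range G'.eval ∧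
      u ∈ Set.range G'.eval := by
  rcases hu with ⟨a, rfl⟩ | ⟨j, hji, rfl⟩
  · exact ⟨G.snoc (.inl a), by simp [SLP.size_snoc], G.range_eval_subset_snoc _,
      _, G.eval_snoc_last_inl a⟩
  · exact ⟨G, rfl, subset_rfl, hG j hji⟩

theorem exists_slp_of_plan_prefix
    (hx : ∀ i : Fin t, ∃ u v, Avail x i u ∧ Avail x i v ∧ x i = u ++ v) :
    ∀ n ≤ t, ∃ G : SLP α, G.size = n ∧ (∀ j : Fin t, (j : ℕ) < n → x j ∈ Set.range G.eval) ∧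
      ∀ j : Fin t, (j : ℕ) + 1 = n → G.Generates (x j) := by
  intro n hn
  induction n with
  | zero => exact ⟨SLP.empty, rfl, by simp, by simp⟩
  | succ n ih =>
    obtain ⟨G, hsize, hcover, -⟩ := ih (by omega)
    let i : Fin t := ⟨n, hn⟩
    obtain ⟨u, v, hu, hv, hxi⟩ := hx i
    obtain ⟨Gu, hGu, hGGu, ku, rfl⟩ := G.exists_mem_range_eval_of_avail (i := i) hcover hu
    obtain ⟨Gv, hGv, hGuGv, kv, rfl⟩ :=
      Gu.exists_mem_range_eval_of_avail (i := i) (fun j hj => hGGu (hcover j hj)) hv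
    obtain ⟨ku', hku'⟩ := hGuGv ⟨ku, rfl⟩
    have hlast : (Gv.snoc (.inr (ku', kv))).eval (Fin.last _) = x i := by
      rw [hxi, SLP.eval_snoc_last_inr, hku']
    refine ⟨Gv.snoc (.inr (ku', kv)), by simp [SLP.size_snoc, hGv, hGu, hsize], ?_, ?_⟩
    · intro j hj
      rcases Nat.lt_succ_iff_lt_or_eq.mp hj with hj | hj
      · exact Gv.range_eval_subset_snoc _ (hGuGv (hGGu (hcover j hj)))
      · obtain rfl : j = i := Fin.ext hj
        exact ⟨_, hlast⟩
    · intro j hj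
      obtain rfl : j = i := Fin.ext (Nat.succ_injective hj)
      exact hlast ▸ Gv.generates_snoc_eval_last _

end PlanToSLP

theorem IsAssemblyPlan.exists_slp {α : Type*} {t : ℕ} {x : Fin t → List α} {w : List α}
    (hp : IsAssemblyPlan t x w) : ∃ G : SLP α, G.Generates w ∧ G.size = t := by
  obtain ⟨hx, hlast⟩ := hp
  split_ifs at hlast with ht
  · obtain ⟨a, rfl⟩ := hlast
    exact ⟨SLP.empty.snoc (.inl a), SLP.eval_snoc_last_inl _ a ▸ SLP.generates_snoc_eval_last _ _,
      by simp [SLP.size_snoc, SLP.size_empty, ht]⟩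
  · obtain ⟨i, hi, rfl⟩ := hlast
    obtain ⟨G, hsize, -, hgen⟩ := exists_slp_of_plan_prefix hx t le_rfl
    exact ⟨G, hgen i (by omega), hsize⟩

namespace SLP

variable {α : Type*} (G : SLP α)

def concats : Finset (Fin G.m) := Finset.univ.filter fun i => (G.rule i).isRight

theorem card_concats : G.concats.card = G.size := rfl

def concatOrder : Fin G.size ↪o Fin G.m := G.concats.orderEmbOfFin G.card_concats

def toPlan : Fin G.size → List α := fun k => G.eval (G.concatOrder k)

theorem mem_concats {i : Fin G.m} : i ∈ G.concats ↔ (G.rule i).isRight := by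
  simp [concats]

theorem avail_toPlan_eval {k : Fin G.size} {j : Fin G.m} (hj : j < G.concatOrder k) :
    Avail G.toPlan k (G.eval j) := by
  rcases hr : G.rule j with a | ⟨p, q⟩
  · exact .inl ⟨a, G.eval_of_rule_inl j hr⟩
  · obtain ⟨k', rfl⟩ : j ∈ Set.range G.concatOrder := by
      rw [concatOrder, Finset.range_orderEmbOfFin, Finset.mem_coe, mem_concats, hr]
      rfl
    exact .inr ⟨k', G.concatOrder.lt_iff_lt.mp hj, rfl⟩

theorem toPlan_eq_append (k : Fin G.size) :
    ∃ u v, Avail G.toPlan k u ∧ Avail G.toPlan k v ∧ G.toPlan k = u ++ v := by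
  have hk : (G.rule (G.concatOrder k)).isRight :=
    G.mem_concats.mp (Finset.orderEmbOfFin_mem _ _ k)
  rcases hr : G.rule (G.concatOrder k) with a | ⟨p, q⟩
  · simp [hr] at hk
  · exact ⟨_, _, G.avail_toPlan_eval (G.wf _ p q hr).1, G.avail_toPlan_eval (G.wf _ p q hr).2,
      G.eval_of_rule_inr _ hr⟩

theorem exists_plan_of_generates {w : List α} (hG : G.Generates w) :
    ∃ t ≤ G.size, ∃ x : Fin t → List α, IsAssemblyPlan t x w := by
  obtain ⟨r, hr, rfl⟩ := hG
  rcases hrule : G.rule r with a | ⟨p, q⟩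
  · exact ⟨0, Nat.zero_le _, Fin.elim0, fun i => i.elim0, by simp [G.eval_of_rule_inl r hrule]⟩
  · have hmem : r ∈ G.concats := G.mem_concats.mpr (by simp [hrule])
    have hpos : 0 < G.size := G.card_concats ▸ Finset.card_pos.mpr ⟨r, hmem⟩
    have hmax : G.concats.max' ⟨r, hmem⟩ = r :=
      le_antisymm (Fin.le_def.mpr (by have := (G.concats.max' ⟨r, hmem⟩).isLt; omega))
        (G.concats.le_max' r hmem)
    refine ⟨G.size, le_rfl, G.toPlan, G.toPlan_eq_append, ?_⟩
    rw [if_neg hpos.ne']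
    refine ⟨⟨G.size - 1, by omega⟩, rfl, ?_⟩
    rw [toPlan, concatOrder, Finset.orderEmbOfFin_last _ hpos, hmax]

end SLP

theorem Nat.sInf_le_sInf_of_forall_exists_le_iff {A B : Set ℕ}
    (h : ∀ K, (∃ a ∈ A, a ≤ K) ↔ ∃ b ∈ B, b ≤ K) : sInf A ≤ sInf B := by
  rcases B.eq_empty_or_nonempty with rfl | hB
  · have hA : A = ∅ := Set.eq_empty_of_forall_notMem fun a ha => by
      simpa using (h a).1 ⟨a, ha, le_rfl⟩
    simp [hA]
  · obtain ⟨a, ha, hle⟩ := (h _).2 ⟨_, Nat.sInf_mem hB, le_rfl⟩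
    exact (Nat.sInf_le ha).trans hle

theorem Nat.sInf_eq_of_forall_exists_le_iff {A B : Set ℕ}
    (h : ∀ K, (∃ a ∈ A, a ≤ K) ↔ ∃ b ∈ B, b ≤ K) : sInf A = sInf B :=
  le_antisymm (Nat.sInf_le_sInf_of_forall_exists_le_iff h)
    (Nat.sInf_le_sInf_of_forall_exists_le_iff fun K => (h K).symm)

theorem exists_slp_iff_exists_plan {α : Type*} (w : List α) (K : ℕ) :
    (∃ G : SLP α, G.Generates w ∧ G.size ≤ K) ↔
      ∃ (t : ℕ) (x : Fin t → List α), IsAssemblyPlan t x w ∧ t ≤ K := by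
  constructor
  · rintro ⟨G, hG, hK⟩
    obtain ⟨t, ht, x, hx⟩ := G.exists_plan_of_generates hG
    exact ⟨t, x, hx, ht.trans hK⟩
  · rintro ⟨t, x, hx, hK⟩
    obtain ⟨G, hG, rfl⟩ := hx.exists_slp
    exact ⟨G, hG, hK⟩

theorem SLPsize_eq_ASI {α : Type*} (w : List α) : SLPsize w = ASI w := by
  refine Nat.sInf_eq_of_forall_exists_le_iff fun K => ?_
  simpa using exists_slp_iff_exists_plan w K

theorem slp_le_iff_asi_le_general {α : Type*} (w : List α) (K : ℕ) :
    ((∃ G : SLP α, G.Generates w ∧ G.size ≤ K) ↔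
      (∃ (t : ℕ) (x : Fin t → List α), IsAssemblyPlan t x w ∧ t ≤ K)) ∧
    (SLPsize w ≤ K ↔ ASI w ≤ K) :=
  ⟨exists_slp_iff_exists_plan w K, by rw [SLPsize_eq_ASI]⟩

theorem slp_le_iff_asi_le {α : Type*} [Fintype α] (w : List α) (hw : w ≠ []) (K : ℕ) :
    ((∃ G : SLP α, G.Generates w ∧ G.size ≤ K) ↔
      (∃ (t : ℕ) (x : Fin t → List α), IsAssemblyPlan t x w ∧ t ≤ K)) ∧
    (SLPsize w ≤ K ↔ ASI w ≤ K) :=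
  slp_le_iff_asi_le_general w K
end
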